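/- In the grid-like frame G, every R₁-path and every R₂-path has length at most 2; more precisely, if a R_i b, b R_i c, and c R_i d (for i ∈ {1,2}), then a contradiction follows. Moreover, the only R_i-paths of length exactly 2 are of the form U(x,y) Rᵢ S(x,y) Rᵢ T(x,y). -/

import Mathlib

inductive GW : Type where
  | P : ℤ → ℤ → GW
  | U : ℤ → ℤ → GW
  | S : ℤ → ℤ → GW
  | T : ℤ → ℤ → GW
deriving DecidableEq

def Apairs (x y : ℤ) (a b : GW) : Prop :=
  (a = .P x y ∧ b = .P (x+1) y) ∨ (a = .P x y ∧ b = .P x (y+1)) ∨ (a = .P x y ∧ b = .U x y)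

def Bpairs (x y : ℤ) (a b : GW) : Prop :=
  (a = .U x y ∧ b = .P (x+1) (y+1)) ∨ (a = .U x y ∧ b = .S x y) ∨
  (a = .S x y ∧ b = .T x y) ∨ (a = .U x y ∧ b = .T x y) ∨
  (a = .P (x+1) y ∧ b = .P (x+1) (y+1)) ∨ (a = .P x (y+1) ∧ b = .P (x+1) (y+1))

/-- R₁ of the grid-like frame G. -/
def R1 (a b : GW) : Prop :=
  ∃ x y : ℤ, (Even (x+y) ∧ Apairs x y a b) ∨ (¬ Even (x+y) ∧ Bpairs x y a b)

/-- R₂ of the grid-like frame G. -/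
def R2 (a b : GW) : Prop :=
  ∃ x y : ℤ, (Even (x+y) ∧ Bpairs x y a b) ∨ (¬ Even (x+y) ∧ Apairs x y a b)

/-! Both relations place the `Apairs` edges at the cells of one colour of a checkerboard colouring
`E` of the diagonals `x + y`, and the `Bpairs` edges at the other colour. Tracking colours shows
that only the vertices `S x y` are both the head and the tail of an edge, and the only edges at
`S x y` are `U x y → S x y → T x y`, while `T x y` is the tail of no edge. -/

def gridRel (E : ℤ → Prop) (a b : GW) : Prop :=
  ∃ x y : ℤ, (E (x+y) ∧ Apairs x y a b) ∨ (¬ E (x+y) ∧ Bpairs x y a b)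

theorem R1_eq_gridRel : R1 = gridRel Even := rfl

theorem R2_eq_gridRel : R2 = gridRel (¬ Even ·) := by
  ext a b
  simp only [R2, gridRel, not_not, or_comm]

namespace GW

def IsTail (E : ℤ → Prop) : GW → Prop
  | P x y => E (x + y)
  | U x y => ¬ E (x + y)
  | S x y => ¬ E (x + y)
  | T _ _ => False

def IsHead (E : ℤ → Prop) : GW → Prop
  | P x y => ¬ E (x + y)
  | U x y => E (x + y)
  | S _ _ => True
  | T _ _ => True

theorem exists_eq_S_of_isTail_of_isHead {E : ℤ → Prop} {b : GW} (ht : b.IsTail E)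
    (hh : b.IsHead E) : ∃ x y, b = S x y := by
  cases b with
  | P x y => exact absurd ht hh
  | U x y => exact absurd hh ht
  | S x y => exact ⟨x, y, rfl⟩
  | T x y => exact ht.elim

end GW

open GW

section Alternating

variable {E : ℤ → Prop} {a b c d : GW}

theorem isTail_of_gridRel (hE : ∀ n, E (n + 1) ↔ ¬ E n) (h : gridRel E a b) : a.IsTail E := by
  obtain ⟨x, y, ⟨hxy, hA⟩ | ⟨hxy, hB⟩⟩ := h
  · rcases hA with ⟨rfl, -⟩ | ⟨rfl, -⟩ | ⟨rfl, -⟩ <;> exact hxy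
  · rcases hB with ⟨rfl, -⟩ | ⟨rfl, -⟩ | ⟨rfl, -⟩ | ⟨rfl, -⟩ | ⟨rfl, -⟩ | ⟨rfl, -⟩ <;>
      simp only [IsTail, add_right_comm x 1 y, ← add_assoc, hE, hxy, not_false_eq_true]

theorem isHead_of_gridRel (hE : ∀ n, E (n + 1) ↔ ¬ E n) (h : gridRel E a b) : b.IsHead E := by
  obtain ⟨x, y, ⟨hxy, hA⟩ | ⟨hxy, hB⟩⟩ := h
  · rcases hA with ⟨-, rfl⟩ | ⟨-, rfl⟩ | ⟨-, rfl⟩ <;>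
      simp only [IsHead, add_right_comm x 1 y, ← add_assoc, hE, hxy, not_true_eq_false,
        not_false_eq_true]
  · rcases hB with ⟨-, rfl⟩ | ⟨-, rfl⟩ | ⟨-, rfl⟩ | ⟨-, rfl⟩ | ⟨-, rfl⟩ | ⟨-, rfl⟩ <;>
      simp only [IsHead, add_right_comm x 1 y, ← add_assoc, hE, hxy, not_not, not_false_eq_true]

theorem eq_U_of_gridRel_S {x y : ℤ} (h : gridRel E a (S x y)) : a = U x y := by
  obtain ⟨u, v, ⟨-, hA⟩ | ⟨-, hB⟩⟩ := h
  · simp [Apairs] at hA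
  · simp_all [Bpairs]

theorem eq_T_of_S_gridRel {x y : ℤ} (h : gridRel E (S x y) c) : c = T x y := by
  obtain ⟨u, v, ⟨-, hA⟩ | ⟨-, hB⟩⟩ := h
  · simp [Apairs] at hA
  · simp_all [Bpairs]

theorem gridRel_two_path (hE : ∀ n, E (n + 1) ↔ ¬ E n) (hab : gridRel E a b)
    (hbc : gridRel E b c) : ∃ x y : ℤ, a = U x y ∧ b = S x y ∧ c = T x y := by
  obtain ⟨x, y, rfl⟩ :=
    exists_eq_S_of_isTail_of_isHead (isTail_of_gridRel hE hbc) (isHead_of_gridRel hE hab)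
  exact ⟨x, y, eq_U_of_gridRel_S hab, rfl, eq_T_of_S_gridRel hbc⟩

theorem gridRel_no_three_path (hE : ∀ n, E (n + 1) ↔ ¬ E n) (hab : gridRel E a b)
    (hbc : gridRel E b c) (hcd : gridRel E c d) : False := by
  obtain ⟨x, y, -, -, rfl⟩ := gridRel_two_path hE hab hbc
  exact isTail_of_gridRel hE hcd

end Alternating

theorem grid_short_paths :
    (∀ a b c d : GW, R1 a b → R1 b c → R1 c d → False) ∧
    (∀ a b c d : GW, R2 a b → R2 b c → R2 c d → False) ∧
    (∀ a b c : GW, R1 a b → R1 b c → ∃ x y : ℤ, a = .U x y ∧ b = .S x y ∧ c = .T x y) ∧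
    (∀ a b c : GW, R2 a b → R2 b c → ∃ x y : ℤ, a = .U x y ∧ b = .S x y ∧ c = .T x y) := by
  have hEven : ∀ n : ℤ, Even (n + 1) ↔ ¬ Even n := fun _ => Int.even_add_one
  have hNotEven : ∀ n : ℤ, ¬ Even (n + 1) ↔ ¬ ¬ Even n := fun _ => Int.even_add_one.not
  rw [R1_eq_gridRel, R2_eq_gridRel]
  exact ⟨fun _ _ _ _ => gridRel_no_three_path hEven, fun _ _ _ _ => gridRel_no_three_path hNotEven,
    fun _ _ _ => gridRel_two_path hEven, fun _ _ _ => gridRel_two_path hNotEven⟩
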